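/- arXiv:2409.01442 — 6 statements merged into one kernel-verified Lean document; each statement's English description precedes it below -/
import Mathlib

section
/- Let k ≥ 3 be an integer, let V be a finite set, and let (C_j)_{j ∈ J} be a family of subsets of V such that |C_i ∩ C_j| ≤ k−2 for all distinct i, j ∈ J. Let H be the k-uniform hypergraph on V whose edges are exactly the k-element subsets of V that are contained in C_j for some j ∈ J. Let F be a slowly growing k-uniform hypergraph with at least one edge in which every vertex lies in some edge. Then for every injective map φ from V(F) to V that sends every edge of F to an edge of H, there exists j ∈ J such that φ(V(F)) ⊆ C_j. -/
open Finset

/-- A family of edges is `k`-uniform if every edge has exactly `k` vertices. -/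
def IsKUniform (k : ℕ) {V : Type*} (E : Finset (Finset V)) : Prop :=
  ∀ e ∈ E, e.card = k

/-- `φ` sends every edge of `FE` to an edge of `HE`. -/
def MapsEdges {U V : Type*} [DecidableEq V] (FE : Finset (Finset U))
    (HE : Finset (Finset V)) (φ : U → V) : Prop :=
  ∀ e ∈ FE, e.image φ ∈ HE

/-- The hypergraph with edges `HE` is `F`-free: there is no injective map of
the vertices of `F` sending every edge of `F` to an edge of `H`. -/
def FFree {U V : Type*} [DecidableEq V] (FE : Finset (Finset U))
    (HE : Finset (Finset V)) : Prop :=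
  ¬ ∃ φ : U → V, Function.Injective φ ∧ MapsEdges FE HE φ

/-- `s` is an independent set of the hypergraph with edges `HE`. -/
def IsIndep {V : Type*} (HE : Finset (Finset V)) (s : Finset V) : Prop :=
  ∀ e ∈ HE, ¬ e ⊆ s

instance {V : Type*} [DecidableEq V] (HE : Finset (Finset V)) :
    DecidablePred (IsIndep HE) :=
  fun s => decidable_of_iff (∀ e ∈ HE, ¬ e ⊆ s) Iff.rfl

/-- A hypergraph is slowly growing if its edges can be ordered `e₁, …, e_t`
so that `|e_i \ (e₁ ∪ ⋯ ∪ e_{i-1})| ≤ 1` for all `i ∈ {2, …, t}`. -/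
def SlowlyGrowing {U : Type*} [DecidableEq U] (FE : Finset (Finset U)) : Prop :=
  ∃ l : List (Finset U), l.Nodup ∧ l.toFinset = FE ∧
    ∀ (i : ℕ) (hi : i < l.length), 1 ≤ i →
      ((l.get ⟨i, hi⟩) \ ((l.take i).foldr (· ∪ ·) ∅)).card ≤ 1

/-- A hypergraph is `k`-partite (degenerate) if its vertex set can be partitioned
into `k` parts such that every edge meets each part in exactly one vertex. -/
def KPartite (k : ℕ) {U : Type*} [DecidableEq U] (FE : Finset (Finset U)) : Prop :=
  ∃ f : U → Fin k, ∀ e ∈ FE, ∀ i : Fin k, (e.filter fun v => f v = i).card = 1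

/-- The off-diagonal Ramsey number `r(F, n)`: the least `N` such that every
`F`-free `k`-uniform hypergraph on `N` vertices contains an independent set
of size `n`. -/
noncomputable def ramseyNumber {U : Type} [DecidableEq U] (k : ℕ)
    (FE : Finset (Finset U)) (n : ℕ) : ℕ :=
  sInf {N : ℕ | ∀ HE : Finset (Finset (Fin N)), IsKUniform k HE → FFree FE HE →
    ∃ s : Finset (Fin N), s.card = n ∧ IsIndep HE s}

/-- `Δ_i(H)`: the maximum number of edges of `H` containing a common `i`-set of vertices. -/
def maxDeg {V : Type*} [Fintype V] [DecidableEq V]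
    (HE : Finset (Finset V)) (i : ℕ) : ℕ :=
  ((Finset.univ : Finset V).powersetCard i).sup fun T =>
    (HE.filter fun e => T ⊆ e).card

/-- The `k`-uniform hypergraph `F_{2k-1}` on the `2k-1` vertices
`v₁, …, v_{k-1}, w₁, …, w_k` (here `Sum.inl` are the `v`'s and `Sum.inr` the `w`'s),
with edges `{v₁, …, v_{k-1}, w_i}` for `1 ≤ i ≤ k-1` together with `{w₁, …, w_k}`. -/
def Fodd (k : ℕ) : Finset (Finset (Fin (k - 1) ⊕ Fin k)) :=
  (Finset.univ.image fun i : Fin (k - 1) =>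
      insert (Sum.inr (Fin.castLE (Nat.sub_le k 1) i))
        ((Finset.univ : Finset (Fin (k - 1))).image Sum.inl))
    ∪ {(Finset.univ : Finset (Fin k)).image Sum.inr}

/-!
Order the edges `e₁, …, e_t` of `F` as in the definition of slowly growing and let
`φ(e₁) ⊆ C_{j₀}`. If `φ(e₁ ∪ ⋯ ∪ e_{i-1}) ⊆ C_{j₀}`, then all but at most one of the `k` points
of the edge `φ(e_i)` of `H` lie in `C_{j₀}`, while `φ(e_i) ⊆ C_j` for some `j`; so
`|C_j ∩ C_{j₀}| ≥ k - 1`, which forces `j = j₀`. Since `F` has no isolated vertices, the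
image of `φ` is `φ(e₁ ∪ ⋯ ∪ e_t) ⊆ C_{j₀}`.
-/

section

variable {U V J : Type*} [DecidableEq U] [DecidableEq V]

lemma Finset.subset_image_sdiff (φ : U → V) (s t : Finset U) :
    s.image φ \ t.image φ ⊆ (s \ t).image φ := by
  rw [sdiff_le_iff, sup_eq_union, ← image_union, union_sdiff_self_eq_union]
  exact image_subset_image subset_union_right

lemma List.mem_foldr_union {l : List (Finset U)} {x : U} :
    x ∈ l.foldr (· ∪ ·) ∅ ↔ ∃ e ∈ l, x ∈ e := by
  induction l with
  | nil => simp
  | cons a t ih => simp [ih]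

lemma List.foldr_union_take_succ (l : List (Finset U)) {n : ℕ} (hn : n < l.length) :
    (l.take (n + 1)).foldr (· ∪ ·) ∅ = (l.take n).foldr (· ∪ ·) ∅ ∪ l[n] := by
  ext x
  rw [List.take_add_one, List.getElem?_eq_getElem hn]
  simp only [List.mem_foldr_union, Option.toList_some, List.mem_append, List.mem_singleton,
    or_and_right, exists_or, exists_eq_left, mem_union]

lemma eq_of_card_sdiff_le_one {k : ℕ} (hk : 2 ≤ k) {C : J → Finset V}
    (hC : ∀ i j : J, i ≠ j → #(C i ∩ C j) ≤ k - 2) {s t : Finset V} {i j : J}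
    (hs : #s = k) (hsi : s ⊆ C i) (htj : t ⊆ C j) (hst : #(s \ t) ≤ 1) : i = j := by
  by_contra hij
  have hinter : #(s ∩ t) ≤ #(C i ∩ C j) := card_le_card (inter_subset_inter hsi htj)
  have := card_inter_add_card_sdiff s t
  have := hC i j hij
  omega

lemma exists_forall_image_subset_of_slowlyGrowing {k : ℕ} (hk : 2 ≤ k) {C : J → Finset V}
    (hC : ∀ i j : J, i ≠ j → #(C i ∩ C j) ≤ k - 2) {φ : U → V} {l : List (Finset U)}
    (hl : l ≠ []) (hedge : ∀ e ∈ l, #(e.image φ) = k ∧ ∃ j, e.image φ ⊆ C j)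
    (hslow : ∀ (i : ℕ) (hi : i < l.length), 1 ≤ i →
      #(l[i] \ (l.take i).foldr (· ∪ ·) ∅) ≤ 1) :
    ∃ j, ∀ e ∈ l, e.image φ ⊆ C j := by
  have hl0 : 0 < l.length := List.length_pos_iff.mpr hl
  obtain ⟨j, hj⟩ := (hedge _ (l.getElem_mem hl0)).2
  have hprefix : ∀ n ≤ l.length, ((l.take n).foldr (· ∪ ·) ∅).image φ ⊆ C j := by
    intro n
    induction n with
    | zero => simp
    | succ n ih =>
      intro hn
      rw [List.foldr_union_take_succ l hn, image_union]
      refine union_subset (ih (Nat.le_of_succ_le hn)) ?_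
      rcases Nat.eq_zero_or_pos n with rfl | hpos
      · exact hj
      obtain ⟨hcard, j', hj'⟩ := hedge _ (l.getElem_mem hn)
      have hsdiff := (card_le_card (subset_image_sdiff φ _ _)).trans
        (card_image_le.trans (hslow n hn hpos))
      exact eq_of_card_sdiff_le_one hk hC hcard hj' (ih (Nat.le_of_succ_le hn)) hsdiff ▸ hj'
  refine ⟨j, fun e he x hx => hprefix _ le_rfl ?_⟩
  obtain ⟨y, hy, rfl⟩ := mem_image.mp hx
  exact mem_image_of_mem φ (List.mem_foldr_union.mpr ⟨e, by simpa using he, hy⟩)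

end

theorem statement6_general (k : ℕ) (hk : 3 ≤ k)
    (V : Type) [Fintype V] [DecidableEq V]
    (J : Type) [Fintype J]
    (C : J → Finset V)
    (hC : ∀ i j : J, i ≠ j → (C i ∩ C j).card ≤ k - 2)
    (HE : Finset (Finset V))
    (hHE : HE = (Finset.univ : Finset (Finset V)).filter fun e =>
      e.card = k ∧ ∃ j : J, e ⊆ C j)
    (U : Type) [DecidableEq U]
    (FE : Finset (Finset U))
    (hslow : SlowlyGrowing FE)
    (hne : FE.Nonempty)
    (hcover : ∀ u : U, ∃ e ∈ FE, u ∈ e)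
    (φ : U → V)
    (hmap : MapsEdges FE HE φ) :
    ∃ j : J, ∀ u : U, φ u ∈ C j := by
  obtain ⟨l, -, rfl, hl⟩ := hslow
  have hedge : ∀ e ∈ l, #(e.image φ) = k ∧ ∃ j, e.image φ ⊆ C j := fun e he => by
    simpa [hHE] using hmap e (List.mem_toFinset.mpr he)
  have hl_ne : l ≠ [] := by rintro rfl; simp at hne
  obtain ⟨j, hj⟩ := exists_forall_image_subset_of_slowlyGrowing (by omega) hC hl_ne hedge hl
  refine ⟨j, fun u => ?_⟩
  obtain ⟨e, he, hu⟩ := hcover u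
  exact hj e (List.mem_toFinset.mp he) (mem_image_of_mem φ hu)

/-- Let `(C_j)_{j ∈ J}` be subsets of a finite set `V` with pairwise
intersections of size at most `k - 2`, and let `H` be the `k`-uniform hypergraph on `V`
whose edges are exactly the `k`-sets contained in some `C_j`. If `F` is a slowly growing
`k`-uniform hypergraph with at least one edge in which every vertex lies in some edge,
then every injective map `φ : V(F) → V` sending edges of `F` to edges of `H` has its
whole image inside a single `C_j`. -/
theorem statement6 (k : ℕ) (hk : 3 ≤ k)
    (V : Type) [Fintype V] [DecidableEq V]
    (J : Type) [Fintype J] [DecidableEq J]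
    (C : J → Finset V)
    (hC : ∀ i j : J, i ≠ j → (C i ∩ C j).card ≤ k - 2)
    (HE : Finset (Finset V))
    (hHE : HE = (Finset.univ : Finset (Finset V)).filter fun e =>
      e.card = k ∧ ∃ j : J, e ⊆ C j)
    (U : Type) [Fintype U] [DecidableEq U]
    (FE : Finset (Finset U))
    (huniform : IsKUniform k FE)
    (hslow : SlowlyGrowing FE)
    (hne : FE.Nonempty)
    (hcover : ∀ u : U, ∃ e ∈ FE, u ∈ e)
    (φ : U → V) (hinj : Function.Injective φ)
    (hmap : MapsEdges FE HE φ) :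
    ∃ j : J, ∀ u : U, φ u ∈ C j :=
  statement6_general k hk V J C hC HE hHE U FE hslow hne hcover φ hmap
end

section
/- Let k ≥ 3 be an integer, let V be a finite set, and let (C_j)_{j ∈ J} be a family of subsets of V such that |C_i ∩ C_j| ≤ k−2 for all distinct i, j ∈ J. For each j ∈ J let c_j : C_j → {1,...,k} be an arbitrary coloring, and let H* be the k-uniform hypergraph on V whose edges are exactly the k-element subsets e of V for which there exists j ∈ J with e ⊆ C_j and with c_j restricted to e taking all k values. Then for every slowly growing non-degenerate k-uniform hypergraph F that has at least one edge and in which every vertex lies in some edge, H* is F-free. -/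
/-!
An embedding `φ` of `F` into `H*` sends every edge into some `C_j`, and this `j` is unique since
two of the sets share at most `k - 2 < k` vertices. Walk through the edges of `F` in slowly growing
order: if the earlier edges all land in `C_{j₀}`, the next edge has at least `k - 1` of its `k`
vertices there, so its own `C_j` meets `C_{j₀}` in more than `k - 2` points and must be `C_{j₀}`.
Thus every edge is rainbow for the single coloring `c_{j₀} ∘ φ`, which makes `F` `k`-partite.
-/

open Finset

def IsRainbow {α : Type*} {k : ℕ} (g : α → Fin k) (s : Finset α) : Prop :=
  ∀ i, ∃ v ∈ s, g v = i

theorem IsRainbow.card_filter_eq_one {α : Type*} {k : ℕ} {g : α → Fin k} {s : Finset α}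
    (hg : IsRainbow g s) (hs : s.card = k) (i : Fin k) : (s.filter (g · = i)).card = 1 := by
  have hinj : Set.InjOn g s :=
    injOn_of_surjOn_of_card_le (t := univ) g (fun _ _ => mem_coe.2 (mem_univ _))
      (fun i _ => by simpa using hg i) (by simp [hs])
  obtain ⟨v, hv, rfl⟩ := hg i
  rw [card_eq_one]
  refine ⟨v, eq_singleton_iff_unique_mem.2 ⟨mem_filter.2 ⟨hv, rfl⟩, fun w hw => ?_⟩⟩
  rw [mem_filter] at hw
  exact hinj hw.1 hv hw.2

theorem isRainbow_image {α β : Type*} [DecidableEq β] {k : ℕ} {g : β → Fin k} {f : α → β}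
    {s : Finset α} : IsRainbow g (s.image f) ↔ IsRainbow (g ∘ f) s := by
  simp [IsRainbow]

theorem kPartite_of_forall_isRainbow {U : Type*} [DecidableEq U] {k : ℕ}
    {FE : Finset (Finset U)} (huniform : IsKUniform k FE) (g : U → Fin k)
    (hg : ∀ e ∈ FE, IsRainbow g e) : KPartite k FE :=
  ⟨g, fun e he => (hg e he).card_filter_eq_one (huniform e he)⟩

theorem List.foldr_union_subset_iff {α : Type*} [DecidableEq α] {l : List (Finset α)}
    {W : Finset α} : l.foldr (· ∪ ·) ∅ ⊆ W ↔ ∀ e ∈ l, e ⊆ W := by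
  induction l with
  | nil => simp
  | cons a t ih => simp [union_subset_iff, ih]

theorem SlowlyGrowing.exists_forall_subset {U : Type*} [DecidableEq U]
    {FE : Finset (Finset U)} (hslow : SlowlyGrowing FE) (hne : FE.Nonempty) :
    ∃ e₀ ∈ FE, ∀ W : Finset U, e₀ ⊆ W → (∀ e ∈ FE, (e \ W).card ≤ 1 → e ⊆ W) →
      ∀ e ∈ FE, e ⊆ W := by
  obtain ⟨l, -, rfl, hgrow⟩ := hslow
  obtain ⟨e₀, he₀⟩ := hne
  have hlen : 0 < l.length := List.length_pos_of_mem (List.mem_toFinset.1 he₀)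
  refine ⟨l[0], List.mem_toFinset.2 (List.getElem_mem hlen), fun W h₀ hclosed => ?_⟩
  have hall : ∀ i (hi : i < l.length), l[i] ⊆ W := by
    intro i
    induction i using Nat.strong_induction_on with
    | _ i ih =>
      intro hi
      rcases Nat.eq_zero_or_pos i with rfl | hpos
      · exact h₀
      have hprev : (l.take i).foldr (· ∪ ·) ∅ ⊆ W := by
        refine List.foldr_union_subset_iff.2 fun e he => ?_
        obtain ⟨m, hm, rfl⟩ := List.mem_take_iff_getElem.1 he
        exact ih m (by omega) _
      refine hclosed _ (List.mem_toFinset.2 (List.getElem_mem hi)) ?_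
      calc (l[i] \ W).card ≤ (l[i] \ (l.take i).foldr (· ∪ ·) ∅).card :=
            card_le_card (sdiff_subset_sdiff subset_rfl hprev)
        _ ≤ 1 := hgrow i hi hpos
  intro e he
  obtain ⟨i, hi, rfl⟩ := List.mem_iff_getElem.1 (List.mem_toFinset.1 he)
  exact hall i hi

theorem eq_of_lt_card_of_subset_inter {V J : Type*} [DecidableEq V] {C : J → Finset V} {m : ℕ}
    (hC : ∀ i j, i ≠ j → (C i ∩ C j).card ≤ m) {s : Finset V} (hs : m < s.card) {i j : J}
    (hi : s ⊆ C i) (hj : s ⊆ C j) : i = j := by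
  by_contra hij
  have := card_le_card (subset_inter hi hj)
  have := hC i j hij
  omega

theorem eq_of_card_sdiff_le_one_s7 {V J : Type*} [DecidableEq V] {C : J → Finset V} {m : ℕ}
    (hC : ∀ i j, i ≠ j → (C i ∩ C j).card ≤ m) {s : Finset V} (hs : m + 1 < s.card) {i j : J}
    (hi : s ⊆ C i) (hj : (s \ C j).card ≤ 1) : i = j :=
  eq_of_lt_card_of_subset_inter hC (s := s ∩ C j) (by
      have := card_sdiff_add_card_inter s (C j)
      omega)
    (inter_subset_left.trans hi) inter_subset_right

theorem exists_forall_image_subset_of_slowlyGrowing_s7 {U V J : Type*} [DecidableEq U]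
    [DecidableEq V] {C : J → Finset V} {k : ℕ} (hk : 2 ≤ k)
    (hC : ∀ i j, i ≠ j → (C i ∩ C j).card ≤ k - 2) {FE : Finset (Finset U)}
    (hslow : SlowlyGrowing FE) (hne : FE.Nonempty) {φ : U → V} (hφ : Function.Injective φ)
    (hcard : ∀ e ∈ FE, (e.image φ).card = k) (hsub : ∀ e ∈ FE, ∃ j, e.image φ ⊆ C j) :
    ∃ j₀, ∀ e ∈ FE, e.image φ ⊆ C j₀ := by
  obtain ⟨e₀, he₀, hspread⟩ := hslow.exists_forall_subset hne
  obtain ⟨j₀, hj₀⟩ := hsub e₀ he₀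
  set W := (C j₀).preimage φ hφ.injOn
  have hW : ∀ e, e.image φ ⊆ C j₀ ↔ e ⊆ W := fun e => by
    rw [image_subset_iff]
    simp only [subset_iff, W, mem_preimage]
  refine ⟨j₀, fun e he => (hW e).2 <| hspread W ((hW e₀).1 hj₀) (fun e he hmiss => ?_) e he⟩
  obtain ⟨j, hj⟩ := hsub e he
  have hmiss' : (e.image φ \ C j₀).card ≤ 1 :=
    calc (e.image φ \ C j₀).card ≤ (e.image φ \ W.image φ).card :=
          card_le_card (sdiff_subset_sdiff subset_rfl ((hW W).2 subset_rfl))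
      _ = ((e \ W).image φ).card := by rw [image_sdiff _ _ hφ]
      _ ≤ 1 := card_image_le.trans hmiss
  rw [← hW, ← eq_of_card_sdiff_le_one_s7 hC (by rw [hcard e he]; omega) hj hmiss']
  exact hj

theorem statement7_general (k : ℕ) (hk : 3 ≤ k)
    (V : Type) [Fintype V] [DecidableEq V]
    (J : Type) [Fintype J]
    (C : J → Finset V)
    (hC : ∀ i j : J, i ≠ j → (C i ∩ C j).card ≤ k - 2)
    (c : J → V → Fin k)
    (HE : Finset (Finset V))
    (hHE : HE = (Finset.univ : Finset (Finset V)).filter fun e =>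
      e.card = k ∧ ∃ j : J, e ⊆ C j ∧ ∀ i : Fin k, ∃ v ∈ e, c j v = i)
    (U : Type) [DecidableEq U]
    (FE : Finset (Finset U))
    (huniform : IsKUniform k FE)
    (hslow : SlowlyGrowing FE)
    (hnondeg : ¬ KPartite k FE)
    (hne : FE.Nonempty) :
    FFree FE HE := by
  rintro ⟨φ, hφ, hmaps⟩
  have hcard : ∀ e ∈ FE, (e.image φ).card = k := fun e he => by
    rw [card_image_of_injective _ hφ, huniform e he]
  have hcolor : ∀ e ∈ FE, ∃ j, e.image φ ⊆ C j ∧ IsRainbow (c j) (e.image φ) := fun e he => by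
    have := hmaps e he
    rw [hHE, mem_filter] at this
    exact this.2.2
  obtain ⟨j₀, hj₀⟩ := exists_forall_image_subset_of_slowlyGrowing_s7 (by omega) hC hslow hne hφ
    hcard fun e he => (hcolor e he).imp fun _ => And.left
  refine hnondeg (kPartite_of_forall_isRainbow huniform (c j₀ ∘ φ) fun e he => ?_)
  obtain ⟨j, hj, hrainbow⟩ := hcolor e he
  obtain rfl := eq_of_lt_card_of_subset_inter hC (by rw [hcard e he]; omega) hj (hj₀ e he)
  exact isRainbow_image.1 hrainbow

/-- Let `(C_j)_{j ∈ J}` be subsets of a finite set `V` with pairwise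
intersections of size at most `k - 2`, let `c_j : C_j → {1, …, k}` be arbitrary colorings,
and let `H*` be the `k`-uniform hypergraph on `V` whose edges are exactly the `k`-sets
contained in some `C_j` on which `c_j` takes all `k` values. Then `H*` is `F`-free for
every slowly growing non-degenerate `k`-uniform hypergraph `F` with at least one edge in
which every vertex lies in some edge. -/
theorem statement7 (k : ℕ) (hk : 3 ≤ k)
    (V : Type) [Fintype V] [DecidableEq V]
    (J : Type) [Fintype J] [DecidableEq J]
    (C : J → Finset V)
    (hC : ∀ i j : J, i ≠ j → (C i ∩ C j).card ≤ k - 2)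
    (c : J → V → Fin k)
    (HE : Finset (Finset V))
    (hHE : HE = (Finset.univ : Finset (Finset V)).filter fun e =>
      e.card = k ∧ ∃ j : J, e ⊆ C j ∧ ∀ i : Fin k, ∃ v ∈ e, c j v = i)
    (U : Type) [Fintype U] [DecidableEq U]
    (FE : Finset (Finset U))
    (huniform : IsKUniform k FE)
    (hslow : SlowlyGrowing FE)
    (hnondeg : ¬ KPartite k FE)
    (hne : FE.Nonempty)
    (hcover : ∀ u : U, ∃ e ∈ FE, u ∈ e) :
    FFree FE HE :=
  statement7_general k hk V J C hC c HE hHE U FE huniform hslow hnondeg hne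
end

section
/- Let k ≥ 3 be an integer and let 𝔽 be a finite field of order q. Let N be the X × Y biadjacency matrix of Γ_{q,k−1} over the reals (rows indexed by X = 𝔽², columns by Y = 𝔽^{k−1}, with N(x,y) = 1 if x and y are adjacent and 0 otherwise), and let J be the X × Y all-ones matrix. Then N·Nᵀ·N = (q−1)·q^{k−3}·J + q^{k−2}·N. Equivalently, if A is the adjacency matrix of Γ_{q,k−1} on vertex set X ⊔ Y and M is the matrix with all entries between the two sides equal to 1 and all entries within each side equal to 0, then A³ = (q−1)q^{k−3}·M + q^{k−2}·A. -/
/-!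
Identify `Y = 𝔽^m` with the polynomials of degree `< m` via their coefficients, so that `x ~ y`
means `y(x₀) = x₁`. Evaluation at one point is a surjective additive map `𝔽^m → 𝔽`, and at two
distinct points a surjective map `𝔽^m → 𝔽²` (interpolate by a line); all fibres of such a map have
the same size. Hence two vertices of `X` have `q^(m-1)` common neighbours if equal, none if they
differ only in the second coordinate, and `q^(m-2)` otherwise. Summing this codegree over the `q`
neighbours `(a, y(a))` of `y ∈ Y`, the term `a = x₀` gives `q^(m-1) N(x,y)` and the other `q - 1`
terms give `q^(m-2)` each.
-/

open Finset Matrix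

lemma AddMonoidHom.card_fiber_of_surjective {G M : Type*} [AddGroup G] [Fintype G] [AddMonoid M]
    [Fintype M] [DecidableEq M] (f : G →+ M) (hf : Function.Surjective f) {q n m : ℕ}
    (hG : Fintype.card G = q ^ n) (hM : Fintype.card M = q ^ m) (hmn : m ≤ n) (c : M) :
    #{g | f g = c} = q ^ (n - m) := by
  have hfiber : ∀ c', #{g | f g = c'} = #{g | f g = c} := fun c' =>
    AddMonoidHom.card_fiber_eq_of_mem_range f (hf c') (hf c)
  have hsum : Fintype.card G = #{g | f g = c} * Fintype.card M := by
    rw [← card_univ, card_eq_sum_card_fiberwise (t := univ) (fun g _ => mem_univ (f g))]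
    simp only [hfiber, sum_const, card_univ, smul_eq_mul, mul_comm]
  have hq : 0 < q ^ m := hM ▸ Fintype.card_pos
  rw [hG, hM, ← Nat.sub_add_cancel hmn, pow_add] at hsum
  exact (Nat.eq_of_mul_eq_mul_right hq hsum).symm

section CoeffEval

variable {R : Type*} [Semiring R]

def coeffEval (n : ℕ) (a : R) : (Fin n → R) →+ R where
  toFun y := ∑ i, y i * a ^ (i : ℕ)
  map_zero' := by simp
  map_add' y z := by simp [add_mul, sum_add_distrib]

lemma coeffEval_apply (n : ℕ) (a : R) (y : Fin n → R) :
    coeffEval n a y = ∑ i, y i * a ^ (i : ℕ) := rfl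

lemma coeffEval_single {n : ℕ} (a : R) (j : Fin n) (c : R) :
    coeffEval n a (Pi.single j c) = c * a ^ (j : ℕ) := by
  rw [coeffEval_apply, sum_eq_single j] <;> simp_all

lemma coeffEval_surjective {n : ℕ} (hn : 1 ≤ n) (a : R) :
    Function.Surjective (coeffEval n a) := fun b =>
  ⟨Pi.single ⟨0, hn⟩ b, by simp [coeffEval_single]⟩

lemma coeffEval_prod_surjective {K : Type*} [Field K] {n : ℕ} (hn : 2 ≤ n)
    {a a' : K} (hne : a ≠ a') :
    Function.Surjective ((coeffEval n a).prod (coeffEval n a')) := by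
  rintro ⟨b, b'⟩
  have hd : a - a' ≠ 0 := sub_ne_zero.2 hne
  set c₀ := (a * b' - a' * b) / (a - a')
  set c₁ := (b - b') / (a - a')
  set line : Fin n → K := Pi.single ⟨0, by omega⟩ c₀ + Pi.single ⟨1, hn⟩ c₁
  have hline : ∀ t, coeffEval n t line = c₀ + c₁ * t := fun t => by simp [line, coeffEval_single]
  refine ⟨line, ?_⟩
  simp only [AddMonoidHom.prod_apply, hline, Prod.mk.injEq, c₀, c₁]
  constructor <;> field_simp <;> ring

end CoeffEval

section Counting

variable {K : Type*} [Field K] [Fintype K] [DecidableEq K] {n : ℕ}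

lemma card_coeffEval_eq (hn : 1 ≤ n) (a c : K) :
    #{y : Fin n → K | coeffEval n a y = c} = Fintype.card K ^ (n - 1) :=
  (coeffEval n a).card_fiber_of_surjective (q := Fintype.card K) (coeffEval_surjective hn a)
    (by simp) (pow_one _).symm hn c

lemma card_coeffEval_eq_and_eq (hn : 2 ≤ n) (a a' b b' : K) :
    #{y : Fin n → K | coeffEval n a y = b ∧ coeffEval n a' y = b'} =
      if a = a' then (if b = b' then Fintype.card K ^ (n - 1) else 0)
      else Fintype.card K ^ (n - 2) := by
  split_ifs with ha hb
  · subst ha hb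
    simpa only [and_self] using card_coeffEval_eq (by omega) a b
  · subst ha
    rw [card_eq_zero, filter_eq_empty_iff]
    rintro y - ⟨rfl, rfl⟩
    exact hb rfl
  · have := ((coeffEval n a).prod (coeffEval n a')).card_fiber_of_surjective (q := Fintype.card K)
      (coeffEval_prod_surjective hn ha) (by simp) (by simp [sq]) hn (b, b')
    simpa only [AddMonoidHom.prod_apply, Prod.mk.injEq] using this

end Counting

section Biadjacency

variable (K R : Type*) [Field K] [Fintype K] [DecidableEq K] [Ring R] (n : ℕ)

/-- The `X × Y` biadjacency matrix of `Γ_{q,n}`. -/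
def biadjacency : Matrix (K × K) (Fin n → K) R :=
  of fun x y => if coeffEval n x.1 y = x.2 then 1 else 0

variable {K R n}

lemma biadjacency_mul_transpose_apply (hn : 2 ≤ n) (x x' : K × K) :
    (biadjacency K R n * (biadjacency K R n)ᵀ) x x' =
      if x.1 = x'.1 then (if x.2 = x'.2 then (Fintype.card K : R) ^ (n - 1) else 0)
      else (Fintype.card K : R) ^ (n - 2) := by
  simp only [mul_apply, transpose_apply, biadjacency, of_apply, boole_mul, ← ite_and]
  rw [sum_boole, card_coeffEval_eq_and_eq hn]
  split_ifs <;> simp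

lemma biadjacency_mul_transpose_mul (hn : 2 ≤ n) :
    biadjacency K R n * (biadjacency K R n)ᵀ * biadjacency K R n =
      (((Fintype.card K : R) - 1) * (Fintype.card K : R) ^ (n - 2)) • of (fun _ _ => 1)
        + ((Fintype.card K : R) ^ (n - 1)) • biadjacency K R n := by
  ext ⟨a, b⟩ y
  rw [mul_apply, Fintype.sum_prod_type]
  simp only [biadjacency_mul_transpose_apply hn]
  simp only [biadjacency, of_apply, mul_ite, mul_one, mul_zero, sum_ite_eq, mem_univ, if_true]
  rw [sum_ite, filter_eq, if_pos (mem_univ a), filter_ne, sum_singleton, sum_const,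
    card_erase_of_mem (mem_univ a), card_univ, nsmul_eq_mul, Nat.cast_sub Fintype.card_pos,
    Nat.cast_one]
  simp only [Matrix.add_apply, Matrix.smul_apply, of_apply, smul_eq_mul, mul_one, mul_ite, mul_zero,
    eq_comm (a := b)]
  rw [add_comm]

end Biadjacency

/-- Let `N` be the `X × Y` biadjacency matrix of `Γ_{q,k-1}` over `ℝ`
and `J` the all-ones matrix. Then `N · Nᵀ · N = (q-1)·q^{k-3} · J + q^{k-2} · N`. -/
theorem statement8 (k q : ℕ) (hk : 3 ≤ k)
    (𝔽 : Type) [Field 𝔽] [Fintype 𝔽] [DecidableEq 𝔽] (hq : Fintype.card 𝔽 = q)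
    (N : Matrix (𝔽 × 𝔽) (Fin (k - 1) → 𝔽) ℝ)
    (hN : ∀ (x : 𝔽 × 𝔽) (y : Fin (k - 1) → 𝔽),
      N x y = if x.2 = ∑ i : Fin (k - 1), y i * x.1 ^ (i : ℕ) then 1 else 0) :
    N * Nᵀ * N =
      (((q : ℝ) - 1) * (q : ℝ) ^ (k - 3)) • (Matrix.of fun _ _ => (1 : ℝ))
        + ((q : ℝ) ^ (k - 2)) • N := by
  have hN' : N = biadjacency 𝔽 ℝ (k - 1) := by
    ext x y
    simp only [hN, biadjacency, of_apply, coeffEval_apply, eq_comm]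
  subst hN' hq
  rw [show k - 3 = k - 1 - 2 by omega, show k - 2 = k - 1 - 1 by omega]
  exact biadjacency_mul_transpose_mul (by omega)
end

section
/- Let k ≥ 3 be an integer and let 𝔽 be a finite field of order q. Then for every S ⊆ X = 𝔽² and T ⊆ Y = 𝔽^{k−1}, the number e(S,T) of edges of Γ_{q,k−1} with one endpoint in S and the other in T satisfies |e(S,T) − |S|·|T|/q| ≤ q^{(k−2)/2}·√(|S|·|T|). -/
/-!
Centre the incidence indicator, `f x y = 1[x ~ y] - 1/q`. Every point of `𝔽²` lies on the
graphs of `q^(m-1)` of the polynomials `y`, and two distinct points on at most `q^(m-2)` common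
ones, because evaluating the coefficient vector at one point (resp. at two distinct points) is a
surjective additive map onto `𝔽` (resp. `𝔽²`), all of whose fibres have the same size. Expanding
the square then gives `∑_y (∑_{x ∈ S} f x y)² ≤ |S| q^(m-1)`, and Cauchy–Schwarz over `T`
finishes.
-/

open Finset Function

lemma AddMonoidHom.card_fiber_mul_card_of_surjective {G M : Type*} [AddGroup G] [Fintype G]
    [AddGroup M] [Fintype M] [DecidableEq M] (f : G →+ M) (hf : Surjective f) (c : M) :
    #{g | f g = c} * Fintype.card M = Fintype.card G := by
  have hfiber : ∀ c', #{g | f g = c'} = #{g | f g = c} := fun c' =>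
    AddMonoidHom.card_fiber_eq_of_mem_range f (hf c') (hf c)
  calc #{g | f g = c} * Fintype.card M = ∑ c' : M, #{g | f g = c'} := by
        simp only [hfiber, sum_const, card_univ, smul_eq_mul, mul_comm]
    _ = Fintype.card G :=
        (card_eq_sum_card_fiberwise (s := univ) fun g _ => mem_coe.2 (mem_univ (f g))).symm

section Mixing

variable {α β : Type*} [Fintype β] (r : α → β → Prop) [∀ x y, Decidable (r x y)] (p : ℝ)

def incidenceDeviation (x : α) (y : β) : ℝ := (if r x y then 1 else 0) - p

variable {r p} {d : ℝ}

lemma sum_incidenceDeviation_mul (hcard : p * Fintype.card β = d)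
    (hdeg : ∀ x, (#{y | r x y} : ℝ) = d) (x x' : α) :
    ∑ y, incidenceDeviation r p x y * incidenceDeviation r p x' y
      = #{y | r x y ∧ r x' y} - p * d := by
  have hcommon : ∑ y, (if r x y then (1 : ℝ) else 0) * (if r x' y then 1 else 0)
      = #{y | r x y ∧ r x' y} := by
    simp only [boole_mul, ← ite_and, sum_boole]
  have hsum : ∀ x, ∑ y, (if r x y then (1 : ℝ) else 0) = d := fun x => by
    rw [sum_boole, hdeg]
  simp only [incidenceDeviation, sub_mul, mul_sub, sum_sub_distrib, ← sum_mul, ← mul_sum,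
    hcommon, hsum, sum_const, card_univ, nsmul_eq_mul, ← hcard]
  ring

lemma sum_sq_sum_incidenceDeviation_le (hcard : p * Fintype.card β = d)
    (hdeg : ∀ x, (#{y | r x y} : ℝ) = d)
    (hcodeg : ∀ x x', x ≠ x' → (#{y | r x y ∧ r x' y} : ℝ) ≤ p * d) (S : Finset α) :
    ∑ y, (∑ x ∈ S, incidenceDeviation r p x y) ^ 2 ≤ #S * d := by
  classical
  have hpd : 0 ≤ p * d := by
    rw [← hcard, ← mul_assoc]
    exact mul_nonneg (mul_self_nonneg p) (Nat.cast_nonneg _)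
  have hpair : ∀ x x', ∑ y, incidenceDeviation r p x y * incidenceDeviation r p x' y
      ≤ if x = x' then d else 0 := by
    intro x x'
    rw [sum_incidenceDeviation_mul hcard hdeg]
    split_ifs with h
    · subst h
      simp only [and_self, hdeg]
      linarith
    · linarith [hcodeg x x' h]
  calc ∑ y, (∑ x ∈ S, incidenceDeviation r p x y) ^ 2
      = ∑ x ∈ S, ∑ x' ∈ S, ∑ y, incidenceDeviation r p x y * incidenceDeviation r p x' y := by
        simp only [sq, sum_mul_sum]
        rw [sum_comm]
        exact sum_congr rfl fun x _ => sum_comm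
    _ ≤ ∑ x ∈ S, ∑ x' ∈ S, if x = x' then d else 0 :=
        sum_le_sum fun x _ => sum_le_sum fun x' _ => hpair x x'
    _ = #S * d := by simp [sum_ite_eq]

theorem abs_card_incidences_sub_le (hcard : p * Fintype.card β = d)
    (hdeg : ∀ x, (#{y | r x y} : ℝ) = d)
    (hcodeg : ∀ x x', x ≠ x' → (#{y | r x y ∧ r x' y} : ℝ) ≤ p * d)
    (S : Finset α) (T : Finset β) :
    |(#{e ∈ S ×ˢ T | r e.1 e.2} : ℝ) - #S * #T * p| ≤ √d * √(#S * #T) := by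
  have hsum : (#{e ∈ S ×ˢ T | r e.1 e.2} : ℝ) - #S * #T * p
      = ∑ y ∈ T, ∑ x ∈ S, incidenceDeviation r p x y := by
    rw [sum_comm, ← sum_product' (f := fun x y => incidenceDeviation r p x y)]
    simp only [incidenceDeviation, sum_sub_distrib, sum_boole, sum_const, card_product,
      nsmul_eq_mul]
    push_cast
    ring
  have hCS : (∑ y ∈ T, ∑ x ∈ S, incidenceDeviation r p x y) ^ 2 ≤ #T * (#S * d) :=
    calc _ ≤ #T * ∑ y ∈ T, (∑ x ∈ S, incidenceDeviation r p x y) ^ 2 :=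
          sq_sum_le_card_mul_sum_sq
      _ ≤ #T * ∑ y, (∑ x ∈ S, incidenceDeviation r p x y) ^ 2 := by
          gcongr
          exact subset_univ T
      _ ≤ #T * (#S * d) := by
          gcongr
          exact sum_sq_sum_incidenceDeviation_le hcard hdeg hcodeg S
  rw [hsum, ← Real.sqrt_mul' _ (by positivity)]
  exact Real.abs_le_sqrt (hCS.trans_eq (by ring))

end Mixing

section EvalCoeffs

variable {R : Type*} [CommRing R] {m : ℕ}

def evalCoeffs (t : R) : (Fin m → R) →+ R :=
  AddMonoidHom.mk' (fun y => ∑ i, y i * t ^ (i : ℕ)) fun y z => by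
    simp only [Pi.add_apply, add_mul, sum_add_distrib]

lemma evalCoeffs_apply (t : R) (y : Fin m → R) : evalCoeffs t y = ∑ i, y i * t ^ (i : ℕ) := rfl

lemma evalCoeffs_single (t : R) (i : Fin m) (c : R) :
    evalCoeffs t (Pi.single i c) = c * t ^ (i : ℕ) := by
  rw [evalCoeffs_apply, sum_eq_single i (fun j _ hj => by simp [hj]) (by simp)]
  simp

lemma evalCoeffs_surjective (hm : 0 < m) (t : R) : Surjective (evalCoeffs (m := m) t) :=
  fun c => ⟨Pi.single ⟨0, hm⟩ c, by simp [evalCoeffs_single]⟩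

end EvalCoeffs

section EvalCoeffsField

variable {𝔽 : Type*} [Field 𝔽] {m : ℕ}

lemma evalCoeffs_prod_surjective (hm : 2 ≤ m) {t t' : 𝔽} (ht : t ≠ t') :
    Surjective ((evalCoeffs (m := m) t).prod (evalCoeffs t')) := by
  rintro ⟨c, c'⟩
  have hsub : t - t' ≠ 0 := sub_ne_zero.2 ht
  -- the line `a + b X` through `(t, c)` and `(t', c')`
  set b := (c - c') / (t - t')
  refine ⟨Pi.single ⟨0, by omega⟩ (c - b * t) + Pi.single ⟨1, hm⟩ b, ?_⟩
  simp only [AddMonoidHom.prod_apply, map_add, evalCoeffs_single, pow_zero, pow_one, mul_one,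
    Prod.mk_add_mk, Prod.mk.injEq]
  constructor
  · ring
  · simp only [b]
    field_simp
    ring

variable [Fintype 𝔽] [DecidableEq 𝔽]

lemma card_evalCoeffs_fiber (hm : 0 < m) (t c : 𝔽) :
    #{y : Fin m → 𝔽 | evalCoeffs t y = c} = Fintype.card 𝔽 ^ (m - 1) := by
  have h := (evalCoeffs t).card_fiber_mul_card_of_surjective (evalCoeffs_surjective hm t) c
  rw [Fintype.card_fun, Fintype.card_fin, ← Nat.sub_add_cancel hm, pow_succ,
    Nat.sub_add_cancel hm] at h
  exact Nat.eq_of_mul_eq_mul_right Fintype.card_pos h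

lemma card_evalCoeffs_fiber_pair (hm : 2 ≤ m) {t t' : 𝔽} (ht : t ≠ t') (c c' : 𝔽) :
    #{y : Fin m → 𝔽 | evalCoeffs t y = c ∧ evalCoeffs t' y = c'} = Fintype.card 𝔽 ^ (m - 2) := by
  have h := ((evalCoeffs t).prod (evalCoeffs t')).card_fiber_mul_card_of_surjective
    (evalCoeffs_prod_surjective hm ht) (c, c')
  simp only [AddMonoidHom.prod_apply, Prod.mk.injEq, Fintype.card_prod, Fintype.card_fun,
    Fintype.card_fin] at h
  rw [← Nat.sub_add_cancel hm, pow_add, sq, Nat.sub_add_cancel hm] at h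
  exact Nat.eq_of_mul_eq_mul_right (by positivity) h

lemma card_common_incidences_le (hm : 2 ≤ m) {x x' : 𝔽 × 𝔽} (hx : x ≠ x') :
    #{y : Fin m → 𝔽 | x.2 = evalCoeffs x.1 y ∧ x'.2 = evalCoeffs x'.1 y}
      ≤ Fintype.card 𝔽 ^ (m - 2) := by
  by_cases h₁ : x.1 = x'.1
  · refine (card_eq_zero.2 (filter_eq_empty_iff.2 ?_)).trans_le (Nat.zero_le _)
    rintro y - ⟨e, e'⟩
    exact hx (Prod.ext h₁ (by rw [e, e', h₁]))
  · simp only [@eq_comm _ x.2, @eq_comm _ x'.2]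
    exact (card_evalCoeffs_fiber_pair hm h₁ x.2 x'.2).le

theorem abs_card_incidences_evalCoeffs_sub_le (hm : 2 ≤ m) (S : Finset (𝔽 × 𝔽))
    (T : Finset (Fin m → 𝔽)) :
    |(#{e ∈ S ×ˢ T | e.1.2 = evalCoeffs e.1.1 e.2} : ℝ) - #S * #T * (Fintype.card 𝔽 : ℝ)⁻¹|
      ≤ √((Fintype.card 𝔽 : ℝ) ^ (m - 1)) * √(#S * #T) := by
  have hq : (Fintype.card 𝔽 : ℝ) ≠ 0 := by positivity
  have hpow : ∀ n, 1 ≤ n →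
      (Fintype.card 𝔽 : ℝ) ^ n = Fintype.card 𝔽 ^ (n - 1) * Fintype.card 𝔽 :=
    fun n hn => by rw [← pow_succ, Nat.sub_add_cancel hn]
  refine abs_card_incidences_sub_le
    (r := fun (x : 𝔽 × 𝔽) (y : Fin m → 𝔽) => x.2 = evalCoeffs x.1 y)
    (p := (Fintype.card 𝔽 : ℝ)⁻¹) (d := (Fintype.card 𝔽 : ℝ) ^ (m - 1)) ?_ ?_ ?_ S T
  · rw [Fintype.card_fun, Fintype.card_fin, Nat.cast_pow, hpow m (by omega)]
    field_simp
  · intro x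
    simp only [@eq_comm _ x.2, card_evalCoeffs_fiber (by omega : 0 < m), Nat.cast_pow]
  · intro x x' hx
    rw [hpow (m - 1) (by omega), inv_mul_eq_div, mul_div_cancel_right₀ _ hq, Nat.sub_sub]
    exact_mod_cast card_common_incidences_le hm hx

end EvalCoeffsField

/-- Expander mixing for `Γ_{q,k-1}`: for all `S ⊆ X = 𝔽²` and
`T ⊆ Y = 𝔽^{k-1}`, the number of edges between `S` and `T` satisfies
`|e(S,T) - |S|·|T|/q| ≤ q^{(k-2)/2} · √(|S|·|T|)`. -/
theorem statement10 (k q : ℕ) (hk : 3 ≤ k)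
    (𝔽 : Type) [Field 𝔽] [Fintype 𝔽] [DecidableEq 𝔽] (hq : Fintype.card 𝔽 = q)
    (S : Finset (𝔽 × 𝔽)) (T : Finset (Fin (k - 1) → 𝔽)) :
    |((((S ×ˢ T).filter fun p =>
          p.1.2 = ∑ i : Fin (k - 1), p.2 i * p.1.1 ^ (i : ℕ)).card : ℝ)
        - (S.card : ℝ) * T.card / q)| ≤
      Real.sqrt ((q : ℝ) ^ (k - 2)) * Real.sqrt ((S.card : ℝ) * T.card) := by
  subst hq
  rw [div_eq_mul_inv, show k - 2 = k - 1 - 1 by omega]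
  exact abs_card_incidences_evalCoeffs_sub_le (by omega) S T
end

section
/- For every integer k ≥ 3, the k-uniform hypergraph F_{2k−1} is slowly growing and non-degenerate. -/
open Finset

/-!
Listing the edges as `{v₁, …, v_{k-1}, w₁}, …, {v₁, …, v_{k-1}, w_{k-1}}, {w₁, …, w_k}`,
each edge after the first has a single vertex not covered by the earlier ones (`w_i`, and `w_k`
for the last edge). For non-degeneracy: in a `k`-partition every edge is rainbow, so the two
edges `V ∪ {w₁}` and `V ∪ {w₂}` with `V = {v₁, …, v_{k-1}}` force `w₁` and `w₂` into the one
class that `V` misses; but `w₁` and `w₂` lie together in `{w₁, …, w_k}`.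
-/

theorem Finset.card_sdiff_le_one_of_subset_insert {α : Type*} [DecidableEq α] {s t : Finset α}
    {x : α} (h : s ⊆ insert x t) : (s \ t).card ≤ 1 :=
  (card_le_card (sdiff_le_iff'.2 (h.trans_eq (insert_eq x t)))).trans_eq (card_singleton x)

theorem List.subset_foldr_union_of_mem {α : Type*} [DecidableEq α] {l : List (Finset α)}
    {s : Finset α} (h : s ∈ l) : s ⊆ l.foldr (· ∪ ·) ∅ := by
  induction l with
  | nil => simp at h
  | cons t l ih =>
    rcases List.mem_cons.1 h with rfl | h
    · exact subset_union_left
    · exact (ih h).trans subset_union_right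

theorem biUnion_Iio_subset_foldr_union_take_ofFn {α : Type*} [DecidableEq α] {n : ℕ}
    (e : Fin n → Finset α) (i : Fin n) :
    (Iio i).biUnion e ⊆ ((List.ofFn e).take i).foldr (· ∪ ·) ∅ := by
  intro y hy
  obtain ⟨j, hj, hy⟩ := mem_biUnion.1 hy
  refine List.subset_foldr_union_of_mem (List.mem_take_iff_getElem.2 ⟨j, ?_, ?_⟩) hy
  · simpa using mem_Iio.1 hj
  · simp

theorem Fin.image_snoc_univ {α : Type*} [DecidableEq α] {n : ℕ} (x : Fin n → α) (a : α) :
    univ.image (Fin.snoc x a : Fin (n + 1) → α) = univ.image x ∪ {a} := by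
  ext y
  simp [Fin.exists_fin_succ', eq_comm, or_comm]

theorem slowlyGrowing_image_of_subset_insert {U : Type*} [DecidableEq U] {n : ℕ}
    (e : Fin n → Finset U) (he : Function.Injective e)
    (hstep : ∀ i : Fin n, 0 < (i : ℕ) → ∃ x, e i ⊆ insert x ((Iio i).biUnion e)) :
    SlowlyGrowing (univ.image e) := by
  refine ⟨List.ofFn e, List.nodup_ofFn.2 he, by ext; simp [List.mem_ofFn], fun i hi hi1 => ?_⟩
  have hin : i < n := by simpa using hi
  obtain ⟨x, hx⟩ := hstep ⟨i, hin⟩ hi1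
  calc ((List.ofFn e).get ⟨i, hi⟩ \ ((List.ofFn e).take i).foldr (· ∪ ·) ∅).card
      ≤ (e ⟨i, hin⟩ \ (Iio ⟨i, hin⟩).biUnion e).card := by
        simpa using card_le_card (sdiff_subset_sdiff subset_rfl
          (biUnion_Iio_subset_foldr_union_take_ofFn e ⟨i, hin⟩))
    _ ≤ 1 := card_sdiff_le_one_of_subset_insert hx

def IsPartiteColoring (k : ℕ) {U : Type*} [DecidableEq U] (FE : Finset (Finset U))
    (f : U → Fin k) : Prop :=
  ∀ e ∈ FE, ∀ i : Fin k, (e.filter fun v => f v = i).card = 1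

namespace IsPartiteColoring

variable {k : ℕ} {U : Type*} [DecidableEq U] {FE : Finset (Finset U)} {f : U → Fin k}
  {e : Finset U}

theorem injOn (hf : IsPartiteColoring k FE f) (he : e ∈ FE) : Set.InjOn f e := by
  intro a ha b hb hab
  obtain ⟨c, hc⟩ := card_eq_one.1 (hf e he (f a))
  have hac : a ∈ e.filter fun v => f v = f a := mem_filter.2 ⟨ha, rfl⟩
  have hbc : b ∈ e.filter fun v => f v = f a := mem_filter.2 ⟨hb, hab.symm⟩
  rw [hc, mem_singleton] at hac hbc
  rw [hac, hbc]

theorem image_eq_univ (hf : IsPartiteColoring k FE f) (he : e ∈ FE) : e.image f = univ := by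
  refine eq_univ_of_forall fun i => ?_
  obtain ⟨c, hc⟩ := card_eq_one.1 (hf e he i)
  obtain ⟨hce, hci⟩ := mem_filter.1 (hc ▸ mem_singleton_self c)
  exact mem_image.2 ⟨c, hce, hci⟩

/-- `f a` is the one colour that `f` misses on `s`, and so is `f b`. -/
theorem apply_eq_of_insert_mem (hf : IsPartiteColoring k FE f) {s : Finset U} {a b : U}
    (ha : insert a s ∈ FE) (hb : insert b s ∈ FE) (has : a ∉ s) : f a = f b := by
  have hfa : f a ∉ s.image f := by
    intro h
    obtain ⟨c, hc, hca⟩ := mem_image.1 h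
    rw [← hf.injOn ha (mem_insert_of_mem hc) (mem_insert_self a s) hca] at has
    exact has hc
  have : f a ∈ (insert b s).image f := hf.image_eq_univ hb ▸ mem_univ _
  rw [image_insert, mem_insert] at this
  exact this.resolve_right hfa

end IsPartiteColoring

theorem not_kPartite_of_insert_mem {k : ℕ} {U : Type*} [DecidableEq U]
    {FE : Finset (Finset U)} {s e : Finset U} {a b : U} (hab : a ≠ b) (has : a ∉ s)
    (ha : insert a s ∈ FE) (hb : insert b s ∈ FE) (he : e ∈ FE) (hae : a ∈ e) (hbe : b ∈ e) :
    ¬ KPartite k FE := by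
  rintro ⟨f, hf⟩
  have hf : IsPartiteColoring k FE f := hf
  exact hab (hf.injOn he hae hbe (hf.apply_eq_of_insert_mem ha hb has))

namespace Fodd

variable (k : ℕ)

-- `core k = {v₁, …, v_{k-1}}`, `spoke k i = w_{i+1}`, `edge k i = core k ∪ {w_{i+1}}` and
-- `top k = {w₁, …, w_k}`; the indices `i : Fin (k - 1)` are 0-based.
def core : Finset (Fin (k - 1) ⊕ Fin k) := univ.image Sum.inl

def spoke (i : Fin (k - 1)) : Fin (k - 1) ⊕ Fin k := Sum.inr (Fin.castLE (Nat.sub_le k 1) i)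

def edge (i : Fin (k - 1)) : Finset (Fin (k - 1) ⊕ Fin k) := insert (spoke k i) (core k)

def top : Finset (Fin (k - 1) ⊕ Fin k) := univ.image Sum.inr

theorem eq_image_edge_union_top : Fodd k = univ.image (edge k) ∪ {top k} := rfl

variable {k}

theorem edge_mem (i : Fin (k - 1)) : edge k i ∈ Fodd k :=
  mem_union_left _ (mem_image_of_mem _ (mem_univ i))

theorem top_mem : top k ∈ Fodd k := mem_union_right _ (mem_singleton_self _)

theorem spoke_mem_top (i : Fin (k - 1)) : spoke k i ∈ top k := mem_image_of_mem _ (mem_univ _)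

theorem spoke_notMem_core (i : Fin (k - 1)) : spoke k i ∉ core k := by simp [spoke, core]

theorem spoke_injective : Function.Injective (spoke k) := by
  intro i j h
  simpa [spoke, Fin.ext_iff] using h

theorem edge_injective : Function.Injective (edge k) := by
  intro i j h
  have : spoke k i ∈ edge k j := h ▸ mem_insert_self _ _
  rcases mem_insert.1 this with h' | h'
  · exact spoke_injective h'
  · exact absurd h' (spoke_notMem_core i)

theorem top_notMem_range_edge : top k ∉ Set.range (edge k) := by
  rintro ⟨i, h⟩
  have : Sum.inl i ∈ edge k i := mem_insert_of_mem (mem_image_of_mem _ (mem_univ i))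
  simp [h, top] at this

theorem edge_subset_insert_edge (i j : Fin (k - 1)) : edge k i ⊆ insert (spoke k i) (edge k j) :=
  insert_subset_insert _ (subset_insert _ _)

theorem top_subset_insert_biUnion_edge (hk : 0 < k) :
    top k ⊆ insert (Sum.inr ⟨k - 1, by omega⟩) (univ.biUnion (edge k)) := by
  intro y hy
  obtain ⟨z, -, rfl⟩ := mem_image.1 hy
  by_cases hz : (z : ℕ) < k - 1
  · exact mem_insert_of_mem (mem_biUnion.2 ⟨⟨z, hz⟩, mem_univ _, mem_insert_self _ _⟩)
  · exact mem_insert.2 (Or.inl (congrArg Sum.inr (Fin.ext (show (z : ℕ) = k - 1 by omega))))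

theorem slowlyGrowing : SlowlyGrowing (Fodd k) := by
  rw [eq_image_edge_union_top, ← Fin.image_snoc_univ]
  refine slowlyGrowing_image_of_subset_insert _
    (Fin.snoc_injective_iff.2 ⟨edge_injective, top_notMem_range_edge⟩) fun i hi => ?_
  induction i using Fin.lastCases with
  | last =>
    rw [Fin.val_last] at hi
    rw [Fin.snoc_last]
    refine ⟨_, (top_subset_insert_biUnion_edge (by omega)).trans
      (insert_subset_insert _ (biUnion_subset.2 fun j _ => ?_))⟩
    have := subset_biUnion_of_mem (Fin.snoc (edge k) (top k)) (mem_Iio.2 (Fin.castSucc_lt_last j))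
    rwa [Fin.snoc_castSucc] at this
  | cast i =>
    rw [Fin.snoc_castSucc]
    have hi0 : (⟨0, by omega⟩ : Fin (k - 1)).castSucc < i.castSucc := by
      simpa [Fin.lt_def] using hi
    refine ⟨spoke k i, (edge_subset_insert_edge i ⟨0, by omega⟩).trans (insert_subset_insert _ ?_)⟩
    have := subset_biUnion_of_mem (Fin.snoc (edge k) (top k)) (mem_Iio.2 hi0)
    rwa [Fin.snoc_castSucc] at this

theorem not_kPartite (hk : 3 ≤ k) : ¬ KPartite k (Fodd k) := by
  have hne : spoke k ⟨0, by omega⟩ ≠ spoke k ⟨1, by omega⟩ :=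
    spoke_injective.ne (by simp [Fin.ext_iff])
  exact not_kPartite_of_insert_mem hne (spoke_notMem_core _) (edge_mem _) (edge_mem _) top_mem
    (spoke_mem_top _) (spoke_mem_top _)

end Fodd

/-- For every `k ≥ 3`, the `k`-uniform hypergraph `F_{2k-1}` is slowly
growing and non-degenerate (not `k`-partite). -/
theorem statement17 (k : ℕ) (hk : 3 ≤ k) :
    SlowlyGrowing (Fodd k) ∧ ¬ KPartite k (Fodd k) :=
  ⟨Fodd.slowlyGrowing, Fodd.not_kPartite hk⟩
end

section
/- Every 3-uniform Berge triangle is isomorphic to exactly one of the following four 3-uniform hypergraphs: the loose cycle LC₃ with edges {1,2,3}, {3,4,5}, {5,6,1}; the tight path TP₃ with edges {1,2,3}, {2,3,4}, {3,4,5}; F₅ with edges {1,2,3}, {1,2,4}, {3,4,5}; and K₄^{3−} with edges {1,2,3}, {1,2,4}, {1,3,4}. -/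
/-!
Write the three edges as `{x, y, p}`, `{y, z, q}`, `{z, x, r}` around the Berge core `x, y, z`.
The isomorphism type only depends on which of the third vertices `p, q, r` coincide with a core
vertex or with one another. If one of them closes the core into the edge `{x, y, z}` (say `q = x`),
the result is `K₄^{3-}` or `TP₃` according as the other two coincide or not. Otherwise `p, q, r`
pairwise distinct give `LC₃`, exactly two equal give `F₅`, and all three equal give `K₄^{3-}`.
The rotation `x ↦ y ↦ z ↦ x` reduces each case to one representative. The four shapes are told
apart by their numbers of vertices, except `TP₃` and `F₅`, of which only `TP₃` has a vertex lying
in every edge.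
-/

open Finset

/-- Two hypergraphs (given by their edge sets) are isomorphic: there is a bijection
between the vertex sets inducing a bijection between the edge sets. -/
def HGIso {U W : Type*} [DecidableEq U] [DecidableEq W]
    (FE : Finset (Finset U)) (GE : Finset (Finset W)) : Prop :=
  ∃ φ : U ≃ W, ∀ e : Finset U, e ∈ FE ↔ e.image φ ∈ GE

/-- A 3-uniform Berge triangle: a 3-uniform hypergraph with exactly three distinct
edges `e₁, e₂, e₃` such that there are three distinct vertices `x, y, z` with
`{x,y} ⊆ e₁`, `{y,z} ⊆ e₂` and `{x,z} ⊆ e₃`. -/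
def IsBergeTriangle {U : Type*} [DecidableEq U] (FE : Finset (Finset U)) : Prop :=
  IsKUniform 3 FE ∧
  ∃ e₁ e₂ e₃ : Finset U, e₁ ≠ e₂ ∧ e₁ ≠ e₃ ∧ e₂ ≠ e₃ ∧ FE = {e₁, e₂, e₃} ∧
    ∃ x y z : U, x ≠ y ∧ y ≠ z ∧ x ≠ z ∧
      x ∈ e₁ ∧ y ∈ e₁ ∧ y ∈ e₂ ∧ z ∈ e₂ ∧ x ∈ e₃ ∧ z ∈ e₃

/-- The loose cycle `LC₃`. -/
def LC3 : Finset (Finset (Fin 6)) := {{0, 1, 2}, {2, 3, 4}, {4, 5, 0}}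

/-- The tight path `TP₃`. -/
def TP3 : Finset (Finset (Fin 5)) := {{0, 1, 2}, {1, 2, 3}, {2, 3, 4}}

/-- The hypergraph `F₅`. -/
def F5 : Finset (Finset (Fin 5)) := {{0, 1, 2}, {0, 1, 3}, {2, 3, 4}}

/-- The hypergraph `K₄^{3-}`. -/
def K4minus : Finset (Finset (Fin 4)) := {{0, 1, 2}, {0, 1, 3}, {0, 2, 3}}

section

variable {U : Type*}

/-- `x, y, z` is the Berge core and `p, q, r` are the third vertices of the edges `{x, y, p}`,
`{y, z, q}`, `{z, x, r}` (see `triangleEdges`); the `edge` fields say that these edges are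
distinct. -/
structure TriangleConfig (x y z p q r : U) : Prop where
  x_ne_y : x ≠ y
  y_ne_z : y ≠ z
  z_ne_x : z ≠ x
  p_ne_x : p ≠ x
  p_ne_y : p ≠ y
  q_ne_y : q ≠ y
  q_ne_z : q ≠ z
  r_ne_z : r ≠ z
  r_ne_x : r ≠ x
  edge₁₂ : ¬(p = z ∧ q = x)
  edge₂₃ : ¬(q = x ∧ r = y)
  edge₃₁ : ¬(r = y ∧ p = z)
  cover : ∀ u, u = x ∨ u = y ∨ u = z ∨ u = p ∨ u = q ∨ u = r

namespace TriangleConfig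

variable {x y z p q r : U}

theorem rotate (h : TriangleConfig x y z p q r) : TriangleConfig y z x q r p where
  x_ne_y := h.y_ne_z
  y_ne_z := h.z_ne_x
  z_ne_x := h.x_ne_y
  p_ne_x := h.q_ne_y
  p_ne_y := h.q_ne_z
  q_ne_y := h.r_ne_z
  q_ne_z := h.r_ne_x
  r_ne_z := h.p_ne_x
  r_ne_x := h.p_ne_y
  edge₁₂ := h.edge₂₃
  edge₂₃ := h.edge₃₁
  edge₃₁ := h.edge₁₂
  cover u := by have := h.cover u; tauto

end TriangleConfig

variable [DecidableEq U]

theorem Finset.exists_eq_insert_pair_of_card_eq_three {s : Finset U} (hs : s.card = 3)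
    {a b : U} (ha : a ∈ s) (hb : b ∈ s) (hab : a ≠ b) : ∃ c, c ≠ a ∧ c ≠ b ∧ s = {a, b, c} := by
  have hb' : b ∈ s.erase a := mem_erase.mpr ⟨hab.symm, hb⟩
  obtain ⟨c, hc⟩ : ∃ c, (s.erase a).erase b = {c} := by
    rw [← card_eq_one, card_erase_of_mem hb', card_erase_of_mem ha, hs]
  have hcs : c ∈ (s.erase a).erase b := hc ▸ mem_singleton_self c
  refine ⟨c, ne_of_mem_erase (mem_of_mem_erase hcs), ne_of_mem_erase hcs, ?_⟩
  rw [← insert_erase ha, ← insert_erase hb', hc]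

namespace HGIso

variable {W : Type*} [DecidableEq W] {E : Finset (Finset U)} {G : Finset (Finset W)}

theorem symm (h : HGIso E G) : HGIso G E := by
  obtain ⟨φ, hφ⟩ := h
  refine ⟨φ.symm, fun g => ?_⟩
  rw [hφ, image_image, φ.self_comp_symm, image_id]

theorem exists_forall_mem (h : HGIso E G) (hE : ∃ v, ∀ e ∈ E, v ∈ e) :
    ∃ w, ∀ g ∈ G, w ∈ g := by
  obtain ⟨φ, hφ⟩ := h
  obtain ⟨v, hv⟩ := hE
  refine ⟨φ v, fun g hg => ?_⟩
  have hg' : g.image φ.symm ∈ E := by rwa [hφ, image_image, φ.self_comp_symm, image_id]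
  obtain ⟨a, ha, rfl⟩ := mem_image.mp (hv _ hg')
  simpa using ha

theorem card_eq {k l : ℕ} {T : Finset (Finset (Fin k))} {T' : Finset (Finset (Fin l))}
    (h : HGIso E T) (h' : HGIso E T') : k = l := by
  obtain ⟨φ, -⟩ := h
  obtain ⟨ψ, -⟩ := h'
  simpa using Fintype.card_congr (φ.symm.trans ψ)

end HGIso

theorem hgIso_of_bijective {W : Type*} [DecidableEq W] {E : Finset (Finset U)}
    (T : Finset (Finset W)) (f : W → U) (hf : Function.Bijective f)
    (hE : E = T.image (image f)) : HGIso E T := by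
  subst hE
  obtain ⟨φ, rfl⟩ : ∃ φ : W ≃ U, ⇑φ = f := ⟨Equiv.ofBijective f hf, rfl⟩
  refine ⟨φ.symm, fun e => ⟨fun he => ?_, fun he => mem_image.mpr ⟨_, he, ?_⟩⟩⟩
  · obtain ⟨t, ht, rfl⟩ := mem_image.mp he
    simpa [image_image] using ht
  · simp [image_image]

theorem hgIso_triple {k : ℕ} (f : Fin k → U) (hnodup : (List.ofFn f).Nodup)
    (hcover : ∀ u, u ∈ List.ofFn f) {A B C : Finset U} {S₁ S₂ S₃ : Finset (Fin k)}
    (hA : A = S₁.image f) (hB : B = S₂.image f) (hC : C = S₃.image f) :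
    HGIso {A, B, C} {S₁, S₂, S₃} :=
  hgIso_of_bijective _ f ⟨List.nodup_ofFn.mp hnodup, fun u => List.mem_ofFn.mp (hcover u)⟩
    (by simp [hA, hB, hC])

def IsStandardTriangle (E : Finset (Finset U)) : Prop :=
  HGIso E LC3 ∨ HGIso E TP3 ∨ HGIso E F5 ∨ HGIso E K4minus

def triangleEdges (x y z p q r : U) : Finset (Finset U) := {{x, y, p}, {y, z, q}, {z, x, r}}

theorem triangleEdges_rotate (x y z p q r : U) :
    triangleEdges y z x q r p = triangleEdges x y z p q r := by
  ext e
  simp only [triangleEdges, mem_insert, mem_singleton]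
  tauto

namespace TriangleConfig

variable {x y z p q r : U}

theorem hgIso_LC3 (h : TriangleConfig x y z p q r) (hpz : p ≠ z) (hqx : q ≠ x) (hry : r ≠ y)
    (hpq : p ≠ q) (hqr : q ≠ r) (hrp : r ≠ p) : HGIso (triangleEdges x y z p q r) LC3 := by
  obtain ⟨_, _, _, _, _, _, _, _, _, -, -, -, hcover⟩ := h
  refine hgIso_triple ![x, p, y, q, z, r] (by simp [List.ofFn_succ]; grind)
    (fun u => by have := hcover u; simp [List.ofFn_succ]; tauto) ?_ ?_ ?_ <;>
    ext <;> simp <;> tauto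

theorem hgIso_TP3 (h : TriangleConfig x y z p x r) (hpr : p ≠ r) :
    HGIso (triangleEdges x y z p x r) TP3 := by
  obtain ⟨_, _, _, _, _, _, _, _, _, _, _, -, hcover⟩ := h
  refine hgIso_triple ![p, y, x, z, r] (by simp [List.ofFn_succ]; grind)
    (fun u => by have := hcover u; simp [List.ofFn_succ]; tauto) ?_ ?_ ?_ <;>
    ext <;> simp <;> tauto

theorem hgIso_F5 (h : TriangleConfig x y z p p r) (hry : r ≠ y) (hpr : p ≠ r) :
    HGIso (triangleEdges x y z p p r) F5 := by
  obtain ⟨_, _, _, _, _, _, _, _, _, -, -, -, hcover⟩ := h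
  refine hgIso_triple ![y, p, x, z, r] (by simp [List.ofFn_succ]; grind)
    (fun u => by have := hcover u; simp [List.ofFn_succ]; tauto) ?_ ?_ ?_ <;>
    ext <;> simp <;> tauto

theorem hgIso_K4minus_of_core_edge (h : TriangleConfig x y z p x p) :
    HGIso (triangleEdges x y z p x p) K4minus := by
  obtain ⟨_, _, _, _, _, _, _, _, _, _, _, -, hcover⟩ := h
  refine hgIso_triple ![x, y, p, z] (by simp [List.ofFn_succ]; grind)
    (fun u => by have := hcover u; simp [List.ofFn_succ]; tauto) ?_ ?_ ?_ <;>
    ext <;> simp <;> tauto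

theorem hgIso_K4minus (h : TriangleConfig x y z p p p) :
    HGIso (triangleEdges x y z p p p) K4minus := by
  obtain ⟨_, _, _, _, _, _, _, _, _, -, -, -, hcover⟩ := h
  refine hgIso_triple ![p, y, x, z] (by simp [List.ofFn_succ]; grind)
    (fun u => by have := hcover u; simp [List.ofFn_succ]; tauto) ?_ ?_ ?_ <;>
    ext <;> simp <;> tauto

theorem classify_of_core_edge (h : TriangleConfig x y z p x r) :
    IsStandardTriangle (triangleEdges x y z p x r) := by
  by_cases hpr : p = r
  · subst hpr
    exact Or.inr <| Or.inr <| Or.inr h.hgIso_K4minus_of_core_edge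
  · exact Or.inr <| Or.inl <| h.hgIso_TP3 hpr

theorem classify_of_not_core_edge (h : TriangleConfig x y z p q r) (hpz : p ≠ z) (hqx : q ≠ x)
    (hry : r ≠ y) :
    IsStandardTriangle (triangleEdges x y z p q r) := by
  by_cases hpq : p = q <;> by_cases hqr : q = r
  · subst hpq hqr
    exact Or.inr <| Or.inr <| Or.inr h.hgIso_K4minus
  · subst hpq
    exact Or.inr <| Or.inr <| Or.inl <| h.hgIso_F5 hry hqr
  · subst hqr
    rw [← triangleEdges_rotate]
    exact Or.inr <| Or.inr <| Or.inl <| h.rotate.hgIso_F5 hpz (Ne.symm hpq)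
  by_cases hrp : r = p
  · subst hrp
    rw [← triangleEdges_rotate, ← triangleEdges_rotate]
    exact Or.inr <| Or.inr <| Or.inl <| h.rotate.rotate.hgIso_F5 hqx hpq
  · exact Or.inl <| h.hgIso_LC3 hpz hqx hry hpq hqr hrp

theorem classify (h : TriangleConfig x y z p q r) :
    IsStandardTriangle (triangleEdges x y z p q r) := by
  by_cases hqx : q = x
  · subst hqx
    exact h.classify_of_core_edge
  by_cases hry : r = y
  · subst hry
    rw [← triangleEdges_rotate]
    exact h.rotate.classify_of_core_edge
  by_cases hpz : p = z
  · subst hpz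
    rw [← triangleEdges_rotate, ← triangleEdges_rotate]
    exact h.rotate.rotate.classify_of_core_edge
  exact h.classify_of_not_core_edge hpz hqx hry

end TriangleConfig

theorem IsBergeTriangle.exists_triangleConfig {E : Finset (Finset U)} (hE : IsBergeTriangle E)
    (hcover : ∀ u : U, ∃ e ∈ E, u ∈ e) :
    ∃ x y z p q r : U, TriangleConfig x y z p q r ∧ E = triangleEdges x y z p q r := by
  obtain ⟨huni, e₁, e₂, e₃, h₁₂, h₁₃, h₂₃, rfl, x, y, z, hxy, hyz, hxz,
    hx₁, hy₁, hy₂, hz₂, hx₃, hz₃⟩ := hE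
  obtain ⟨p, hpx, hpy, rfl⟩ :=
    exists_eq_insert_pair_of_card_eq_three (huni _ (by simp)) hx₁ hy₁ hxy
  obtain ⟨q, hqy, hqz, rfl⟩ :=
    exists_eq_insert_pair_of_card_eq_three (huni _ (by simp)) hy₂ hz₂ hyz
  obtain ⟨r, hrz, hrx, rfl⟩ :=
    exists_eq_insert_pair_of_card_eq_three (huni _ (by simp)) hz₃ hx₃ hxz.symm
  refine ⟨x, y, z, p, q, r, ⟨hxy, hyz, hxz.symm, hpx, hpy, hqy, hqz, hrz, hrx, ?_, ?_, ?_, ?_⟩, rfl⟩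
  · rintro ⟨rfl, rfl⟩
    exact h₁₂ (by ext; simp; tauto)
  · rintro ⟨rfl, rfl⟩
    exact h₂₃ (by ext; simp; tauto)
  · rintro ⟨rfl, rfl⟩
    exact h₁₃ (by ext; simp; tauto)
  · intro u
    obtain ⟨e, he, hu⟩ := hcover u
    simp only [mem_insert, mem_singleton] at he
    rcases he with rfl | rfl | rfl <;> simp at hu <;> tauto

end

theorem statement18_general (U : Type) [DecidableEq U]
    (FE : Finset (Finset U))
    (hcover : ∀ u : U, ∃ e ∈ FE, u ∈ e)
    (hberge : IsBergeTriangle FE) :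
    (HGIso FE LC3 ∨ HGIso FE TP3 ∨ HGIso FE F5 ∨ HGIso FE K4minus) ∧
    ¬ (HGIso FE LC3 ∧ HGIso FE TP3) ∧
    ¬ (HGIso FE LC3 ∧ HGIso FE F5) ∧
    ¬ (HGIso FE LC3 ∧ HGIso FE K4minus) ∧
    ¬ (HGIso FE TP3 ∧ HGIso FE F5) ∧
    ¬ (HGIso FE TP3 ∧ HGIso FE K4minus) ∧
    ¬ (HGIso FE F5 ∧ HGIso FE K4minus) := by
  have hTP3 : ∃ v, ∀ e ∈ TP3, v ∈ e := ⟨2, by decide⟩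
  have hF5 : ¬∃ v, ∀ e ∈ F5, v ∈ e := by decide
  refine ⟨?_, fun ⟨h, h'⟩ => absurd (h.card_eq h') (by decide),
    fun ⟨h, h'⟩ => absurd (h.card_eq h') (by decide),
    fun ⟨h, h'⟩ => absurd (h.card_eq h') (by decide),
    fun ⟨h, h'⟩ => hF5 (h'.exists_forall_mem (h.symm.exists_forall_mem hTP3)),
    fun ⟨h, h'⟩ => absurd (h.card_eq h') (by decide),
    fun ⟨h, h'⟩ => absurd (h.card_eq h') (by decide)⟩
  obtain ⟨x, y, z, p, q, r, h, rfl⟩ := hberge.exists_triangleConfig hcover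
  exact h.classify

/-- Every 3-uniform Berge triangle (in which every vertex lies in some
edge) is isomorphic to exactly one of `LC₃`, `TP₃`, `F₅`, `K₄^{3-}`. -/
theorem statement18 (U : Type) [Fintype U] [DecidableEq U]
    (FE : Finset (Finset U))
    (hcover : ∀ u : U, ∃ e ∈ FE, u ∈ e)
    (hberge : IsBergeTriangle FE) :
    (HGIso FE LC3 ∨ HGIso FE TP3 ∨ HGIso FE F5 ∨ HGIso FE K4minus) ∧
    ¬ (HGIso FE LC3 ∧ HGIso FE TP3) ∧
    ¬ (HGIso FE LC3 ∧ HGIso FE F5) ∧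
    ¬ (HGIso FE LC3 ∧ HGIso FE K4minus) ∧
    ¬ (HGIso FE TP3 ∧ HGIso FE F5) ∧
    ¬ (HGIso FE TP3 ∧ HGIso FE K4minus) ∧
    ¬ (HGIso FE F5 ∧ HGIso FE K4minus) :=
  statement18_general U FE hcover hberge
end
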